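/- Ω(δ) tends to +∞ as δ tends to 1 from the left, i.e. for every M > 0 there exists δ₀ < 1 such that for all δ with δ₀ < δ < 1 one has Ω(δ) > M. -/

import Mathlib

/-!
For `1/2 < δ < 1` the bracket of the integrand is at least `r^(-δ) - r^(-1/2) ≥ 0`, and the first
two factors are at least `1/2` and `1`, so `Ω(δ) ≥ (1/(1-δ) - 2)/(2π)`, which blows up as `δ → 1⁻`.
The set integral defining `Ω` is `0` unless the integrand is integrable; integrability follows from
`r^(-δ) (1-r)^(-1/2) ≤ 2 (r^(-δ) + (1-r)^(-1/2))` on `(0, 1)`.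
-/

open MeasureTheory

/-- The function Ω from the paper: for δ < 1, δ ≠ 1/2,
`Ω(δ) = (1/π) ∫₀¹ (1/(1+√(1−r))) (1−r)^(−1/2) ((1/(1−2δ))(r^(−1/2) − r^(−δ)) + r^(1/2−δ)) dr`. -/
noncomputable def Omega (δ : ℝ) : ℝ :=
  (1 / Real.pi) *
    ∫ r in Set.Ioo (0:ℝ) 1,
      (1 / (1 + Real.sqrt (1 - r))) * (1 - r) ^ (-(1:ℝ)/2) *
        ((1 / (1 - 2*δ)) * (r ^ (-(1:ℝ)/2) - r ^ (-δ)) + r ^ ((1:ℝ)/2 - δ))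

open Set Real Filter Topology

lemma rpow_neg_le_two {x b : ℝ} (hx : 1 / 2 ≤ x) (hb₀ : 0 ≤ b) (hb₁ : b ≤ 1) :
    x ^ (-b) ≤ 2 :=
  calc x ^ (-b) ≤ (1 / 2 : ℝ) ^ (-b) := rpow_le_rpow_of_nonpos (by norm_num) hx (by linarith)
    _ = 2 ^ b := by rw [one_div, inv_rpow zero_le_two, rpow_neg zero_le_two, inv_inv]
    _ ≤ 2 ^ (1 : ℝ) := rpow_le_rpow_of_exponent_le one_le_two hb₁
    _ = 2 := rpow_one 2

lemma rpow_neg_mul_one_sub_rpow_neg_le {r a b : ℝ} (hr₀ : 0 < r) (hr₁ : r < 1)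
    (ha₀ : 0 ≤ a) (ha₁ : a ≤ 1) (hb₀ : 0 ≤ b) (hb₁ : b ≤ 1) :
    r ^ (-a) * (1 - r) ^ (-b) ≤ 2 * (r ^ (-a) + (1 - r) ^ (-b)) := by
  have hx : 0 ≤ r ^ (-a) := rpow_nonneg hr₀.le _
  have hy : 0 ≤ (1 - r) ^ (-b) := rpow_nonneg (by linarith) _
  rcases le_total r (1 / 2) with hr | hr
  · nlinarith [rpow_neg_le_two (x := 1 - r) (by linarith) hb₀ hb₁]
  · nlinarith [rpow_neg_le_two hr ha₀ ha₁]

lemma integrableOn_one_sub_rpow_Ioo {p : ℝ} (hp : -1 < p) :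
    IntegrableOn (fun r : ℝ => (1 - r) ^ p) (Ioo 0 1) := by
  have h := ((intervalIntegral.intervalIntegrable_rpow' hp (a := 0) (b := 1)).comp_sub_left 1).symm
  rw [sub_zero, sub_self] at h
  exact (intervalIntegrable_iff_integrableOn_Ioo_of_le zero_le_one).1 h

lemma setIntegral_rpow_Ioo_zero_one {p : ℝ} (hp : -1 < p) :
    ∫ r in Ioo (0 : ℝ) 1, r ^ p = 1 / (p + 1) := by
  rw [← integral_Ioc_eq_integral_Ioo, ← intervalIntegral.integral_of_le zero_le_one,
    integral_rpow (Or.inl hp), one_rpow, zero_rpow (by linarith), sub_zero]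

noncomputable def omegaBracket (δ r : ℝ) : ℝ :=
  (1 / (1 - 2*δ)) * (r ^ (-(1:ℝ)/2) - r ^ (-δ)) + r ^ ((1:ℝ)/2 - δ)

noncomputable def omegaIntegrand (δ r : ℝ) : ℝ :=
  (1 / (1 + √(1 - r))) * (1 - r) ^ (-(1:ℝ)/2) * omegaBracket δ r

lemma Omega_eq (δ : ℝ) : Omega δ = π⁻¹ * ∫ r in Ioo (0 : ℝ) 1, omegaIntegrand δ r := by
  rw [Omega, one_div]; rfl

lemma one_div_one_sub_two_mul_mul_sub (δ x y : ℝ) :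
    1 / (1 - 2 * δ) * (x - y) = (y - x) / (2 * δ - 1) := by
  rw [show 1 - 2 * δ = -(2 * δ - 1) by ring, div_neg, neg_mul, ← mul_neg, neg_sub,
    one_div_mul_eq_div]

section

variable {δ r : ℝ} (hδ : 1 / 2 < δ) (hr₀ : 0 < r) (hr₁ : r ≤ 1)
include hδ hr₀ hr₁

lemma rpow_neg_sub_rpow_neg_half_nonneg : 0 ≤ r ^ (-δ) - r ^ (-(1:ℝ)/2) :=
  sub_nonneg.2 (rpow_le_rpow_of_exponent_ge hr₀ hr₁ (by linarith))

lemma rpow_neg_sub_le_omegaBracket (hδ₁ : δ ≤ 1) :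
    r ^ (-δ) - r ^ (-(1:ℝ)/2) ≤ omegaBracket δ r := by
  have hd := rpow_neg_sub_rpow_neg_half_nonneg hδ hr₀ hr₁
  rw [omegaBracket, one_div_one_sub_two_mul_mul_sub]
  calc r ^ (-δ) - r ^ (-(1:ℝ)/2) ≤ (r ^ (-δ) - r ^ (-(1:ℝ)/2)) / (2 * δ - 1) :=
        le_div_self hd (by linarith) (by linarith)
    _ ≤ _ := le_add_of_nonneg_right (rpow_nonneg hr₀.le _)

lemma omegaBracket_le : omegaBracket δ r ≤ (1 / (2 * δ - 1) + 1) * r ^ (-δ) := by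
  have h₁ : r ^ (-δ) - r ^ (-(1:ℝ)/2) ≤ r ^ (-δ) := sub_le_self _ (rpow_nonneg hr₀.le _)
  have h₂ : r ^ ((1:ℝ)/2 - δ) ≤ r ^ (-δ) := rpow_le_rpow_of_exponent_ge hr₀ hr₁ (by linarith)
  rw [omegaBracket, one_div_one_sub_two_mul_mul_sub, add_mul, one_div_mul_eq_div, one_mul]
  gcongr
  linarith

end

section

variable {δ r : ℝ} (hδ : 1 / 2 < δ) (hδ₁ : δ < 1) (hr₀ : 0 < r) (hr₁ : r < 1)
include hδ hδ₁ hr₀ hr₁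

lemma rpow_neg_sub_div_two_le_omegaIntegrand :
    (r ^ (-δ) - r ^ (-(1:ℝ)/2)) / 2 ≤ omegaIntegrand δ r := by
  have hd := rpow_neg_sub_rpow_neg_half_nonneg hδ hr₀ hr₁.le
  have hA : 1 / 2 ≤ 1 / (1 + √(1 - r)) := by
    gcongr
    linarith [sqrt_le_one (x := 1 - r) |>.mpr (by linarith)]
  have hB : 1 ≤ (1 - r) ^ (-(1:ℝ)/2) :=
    one_le_rpow_of_pos_of_le_one_of_nonpos (by linarith) (by linarith) (by norm_num)
  have hC := rpow_neg_sub_le_omegaBracket hδ hr₀ hr₁.le hδ₁.le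
  calc (r ^ (-δ) - r ^ (-(1:ℝ)/2)) / 2 = 1 / 2 * 1 * (r ^ (-δ) - r ^ (-(1:ℝ)/2)) := by ring
    _ ≤ omegaIntegrand δ r := by unfold omegaIntegrand; gcongr

lemma omegaIntegrand_nonneg : 0 ≤ omegaIntegrand δ r :=
  (div_nonneg (rpow_neg_sub_rpow_neg_half_nonneg hδ hr₀ hr₁.le) zero_le_two).trans
    (rpow_neg_sub_div_two_le_omegaIntegrand hδ hδ₁ hr₀ hr₁)

lemma omegaIntegrand_le :
    omegaIntegrand δ r ≤
      2 * (1 / (2 * δ - 1) + 1) * (r ^ (-δ) + (1 - r) ^ (-(1:ℝ)/2)) := by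
  have hA : 1 / (1 + √(1 - r)) ≤ 1 := by
    rw [div_le_one (by positivity)]; linarith [sqrt_nonneg (1 - r)]
  have hC₀ := (rpow_neg_sub_rpow_neg_half_nonneg hδ hr₀ hr₁.le).trans
    (rpow_neg_sub_le_omegaBracket hδ hr₀ hr₁.le hδ₁.le)
  have hprod := rpow_neg_mul_one_sub_rpow_neg_le hr₀ hr₁ (by linarith) hδ₁.le
    (b := 1 / 2) (by norm_num) (by norm_num)
  rw [← neg_div] at hprod
  have hc : 0 ≤ 1 / (2 * δ - 1) + 1 := add_nonneg (one_div_nonneg.2 (by linarith)) zero_le_one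
  calc omegaIntegrand δ r ≤ 1 * (1 - r) ^ (-(1:ℝ)/2) * ((1 / (2 * δ - 1) + 1) * r ^ (-δ)) := by
        unfold omegaIntegrand
        gcongr
        exact omegaBracket_le hδ hr₀ hr₁.le
    _ = (1 / (2 * δ - 1) + 1) * (r ^ (-δ) * (1 - r) ^ (-(1:ℝ)/2)) := by ring
    _ ≤ (1 / (2 * δ - 1) + 1) * (2 * (r ^ (-δ) + (1 - r) ^ (-(1:ℝ)/2))) := by gcongr
    _ = _ := by ring

end

lemma integrableOn_omegaIntegrand {δ : ℝ} (hδ : 1 / 2 < δ) (hδ₁ : δ < 1) :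
    IntegrableOn (omegaIntegrand δ) (Ioo 0 1) := by
  have hdom : IntegrableOn
      (fun r => 2 * (1 / (2 * δ - 1) + 1) * (r ^ (-δ) + (1 - r) ^ (-(1:ℝ)/2))) (Ioo 0 1) :=
    (((intervalIntegral.integrableOn_Ioo_rpow_iff zero_lt_one).2 (by linarith)).add
      (integrableOn_one_sub_rpow_Ioo (by norm_num))).const_mul _
  refine hdom.mono' (by unfold omegaIntegrand omegaBracket; fun_prop) ?_
  filter_upwards [ae_restrict_mem measurableSet_Ioo] with r ⟨hr₀, hr₁⟩
  rw [norm_of_nonneg (omegaIntegrand_nonneg hδ hδ₁ hr₀ hr₁)]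
  exact omegaIntegrand_le hδ hδ₁ hr₀ hr₁

lemma one_div_one_sub_sub_two_div_le_Omega {δ : ℝ} (hδ : 1 / 2 < δ) (hδ₁ : δ < 1) :
    (1 / (1 - δ) - 2) / (2 * π) ≤ Omega δ := by
  have h₁ : IntegrableOn (fun r : ℝ => r ^ (-δ)) (Ioo 0 1) :=
    (intervalIntegral.integrableOn_Ioo_rpow_iff zero_lt_one).2 (by linarith)
  have h₂ : IntegrableOn (fun r : ℝ => r ^ (-(1:ℝ)/2)) (Ioo 0 1) :=
    (intervalIntegral.integrableOn_Ioo_rpow_iff zero_lt_one).2 (by norm_num)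
  have hlower : ∫ r in Ioo (0 : ℝ) 1, (r ^ (-δ) - r ^ (-(1:ℝ)/2)) / 2 = (1 / (1 - δ) - 2) / 2 := by
    rw [integral_div, integral_sub h₁ h₂, setIntegral_rpow_Ioo_zero_one (by linarith),
      setIntegral_rpow_Ioo_zero_one (by norm_num)]
    norm_num
    ring
  have hmono : ∫ r in Ioo (0 : ℝ) 1, (r ^ (-δ) - r ^ (-(1:ℝ)/2)) / 2 ≤
      ∫ r in Ioo (0 : ℝ) 1, omegaIntegrand δ r :=
    setIntegral_mono_on ((h₁.sub h₂).div_const 2) (integrableOn_omegaIntegrand hδ hδ₁)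
      measurableSet_Ioo fun r ⟨hr₀, hr₁⟩ => rpow_neg_sub_div_two_le_omegaIntegrand hδ hδ₁ hr₀ hr₁
  rw [Omega_eq, ← div_div, div_eq_inv_mul, ← hlower]
  exact mul_le_mul_of_nonneg_left hmono (inv_nonneg.2 pi_pos.le)

lemma tendsto_Omega_nhdsLT_one : Tendsto Omega (𝓝[<] 1) atTop := by
  have h : Tendsto (fun δ : ℝ => (1 / (1 - δ) - 2) / (2 * π)) (𝓝[<] 1) atTop := by
    have h₀ : Tendsto (fun δ : ℝ => 1 - δ) (𝓝[<] 1) (𝓝[>] 0) := by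
      have h := (map_subLeft_nhdsLT (c := (1 : ℝ)) (a := 1)).le
      rwa [sub_self] at h
    simp only [one_div]
    exact (tendsto_atTop_add_const_right _ _ (tendsto_inv_nhdsGT_zero.comp h₀)).atTop_div_const
      (by positivity)
  refine tendsto_atTop_mono' _ ?_ h
  filter_upwards [Ioo_mem_nhdsLT (show (1 / 2 : ℝ) < 1 by norm_num)] with δ ⟨hδ, hδ₁⟩
  exact one_div_one_sub_sub_two_div_le_Omega hδ hδ₁

theorem Omega_tendsto_atTop :
    ∀ M : ℝ, 0 < M → ∃ δ₀ : ℝ, δ₀ < 1 ∧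
      ∀ δ : ℝ, δ₀ < δ → δ < 1 → Omega δ > M := by
  intro M _
  obtain ⟨δ₀, hδ₀, hsub⟩ :=
    mem_nhdsLT_iff_exists_Ioo_subset.1 (tendsto_Omega_nhdsLT_one.eventually_gt_atTop M)
  exact ⟨δ₀, hδ₀, fun δ h₀ h₁ => hsub ⟨h₀, h₁⟩⟩
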